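/- In the automaton A constructed from the graph G as above (states s_1,…,s_p, t_1,…,t_p, f; letter ṽ_i sends s_i to f, sends s_j to t_j whenever v_i v_j ∈ E, and all other transitions are self-loops), every synchronizing set of states whose states are all mapped to f by some word yields an independent set: if a word w maps each state of S' to f, then I' = { v_i : s_i ∈ S' } is an independent set in G. -/

import Mathlib

/-! A word sending `s_i` to `f` must contain the letter `i`, with no neighbour of `i` before its
first occurrence. For adjacent `i ≠ j` this is impossible for both: whichever of the two letters
comes first in the word is a neighbour occurring before the other one. -/

def deltaStar {Q A : Type*} (δ : Q → A → Q) (q : Q) (w : List A) : Q :=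
  w.foldl δ q

def IsSyncSet {Q A : Type*} (δ : Q → A → Q) (S : Set Q) : Prop :=
  ∃ (w : List A) (q : Q), ∀ s ∈ S, deltaStar δ s w = q

/-- States of the automaton built from a graph on p vertices:
states s_i, t_i (i < p) and a sink-target state f. -/
inductive St (p : ℕ) : Type where
  | s : Fin p → St p
  | t : Fin p → St p
  | f : St p
deriving DecidableEq

/-- Transitions: letter j sends s_j to f, sends s_i to t_i when v_i v_j ∈ E,
and all other transitions are self-loops. -/
def gDelta {p : ℕ} (G : SimpleGraph (Fin p)) [DecidableRel G.Adj] :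
    St p → Fin p → St p
  | St.s i, j => if i = j then St.f else if G.Adj i j then St.t i else St.s i
  | St.t i, _ => St.t i
  | St.f, _ => St.f

theorem List.mem_or_mem_of_append_cons_eq {α : Type*} {a b : α} {w₁ w₂ u₁ u₂ : List α}
    (h : w₁ ++ a :: w₂ = u₁ ++ b :: u₂) (hab : a ≠ b) : a ∈ u₁ ∨ b ∈ w₁ := by
  induction w₁ generalizing u₁ with
  | nil =>
    cases u₁ with
    | nil => exact absurd (List.cons.inj h).1 hab
    | cons y u₁ => exact .inl (by simp [(List.cons.inj h).1])
  | cons x w₁ ih =>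
    cases u₁ with
    | nil => exact .inr (by simp [(List.cons.inj h).1])
    | cons y u₁ =>
      obtain ⟨rfl, h'⟩ := List.cons.inj h
      exact (ih h').imp (List.mem_cons_of_mem _) (List.mem_cons_of_mem _)

@[simp]
theorem deltaStar_cons {Q A : Type*} (δ : Q → A → Q) (q : Q) (a : A) (w : List A) :
    deltaStar δ q (a :: w) = deltaStar δ (δ q a) w :=
  rfl

section gDelta

variable {p : ℕ} (G : SimpleGraph (Fin p)) [DecidableRel G.Adj]

@[simp]
theorem deltaStar_gDelta_t (i : Fin p) (w : List (Fin p)) :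
    deltaStar (gDelta G) (St.t i) w = St.t i := by
  induction w with
  | nil => rfl
  | cons a w ih => exact ih

/-- `s_i` escapes to `f` only through the letter `i`, and any earlier neighbour of `i` traps it
in `t_i`. -/
theorem exists_eq_append_cons_of_deltaStar_s_eq_f {i : Fin p} {w : List (Fin p)}
    (h : deltaStar (gDelta G) (St.s i) w = St.f) :
    ∃ w₁ w₂, w = w₁ ++ i :: w₂ ∧ ∀ x ∈ w₁, ¬ G.Adj i x := by
  induction w with
  | nil => cases h
  | cons a w ih =>
    rw [deltaStar_cons] at h
    by_cases hia : i = a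
    · exact ⟨[], w, by rw [hia]; rfl, by simp⟩
    by_cases hadj : G.Adj i a
    · simp [gDelta, hia, hadj] at h
    · simp only [gDelta, hia, hadj, if_false] at h
      obtain ⟨w₁, w₂, rfl, hw₁⟩ := ih h
      exact ⟨a :: w₁, w₂, rfl, List.forall_mem_cons.2 ⟨hadj, hw₁⟩⟩

end gDelta

/-- If a word maps every state of S' to f, then the corresponding vertex set
is independent in G. -/
theorem stmt_8 {p : ℕ} (G : SimpleGraph (Fin p)) [DecidableRel G.Adj]
    (S' : Set (St p)) (w : List (Fin p))
    (hw : ∀ q ∈ S', deltaStar (gDelta G) q w = St.f) :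
    ({i : Fin p | St.s i ∈ S'}).Pairwise (fun a b => ¬ G.Adj a b) := by
  intro i hi j hj hij hadj
  obtain ⟨w₁, w₂, rfl, hi_free⟩ := exists_eq_append_cons_of_deltaStar_s_eq_f G (hw _ hi)
  obtain ⟨u₁, u₂, hsplit, hj_free⟩ := exists_eq_append_cons_of_deltaStar_s_eq_f G (hw _ hj)
  rcases List.mem_or_mem_of_append_cons_eq hsplit hij with hi_mem | hj_mem
  · exact hj_free i hi_mem hadj.symm
  · exact hi_free j hj_mem hadj
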